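/- arXiv:0911.3132 — 6 statements merged into one kernel-verified Lean document; each statement's English description precedes it below -/
import Mathlib

section
/- Let ∂N : J × J → R be defined by ∂N((a₀,a₁,a₂),(b₀,b₁,b₂)) = trace(adjugate(a₀)·b₀) + λ·trace(adjugate(a₁)·b₁) + λ⁻¹·trace(adjugate(a₂)·b₂) − trace(b₀·a₁·a₂) − trace(a₀·b₁·a₂) − trace(a₀·a₁·b₂). Then for all x, y ∈ J one has T(x^#, y) = ∂N(x, y); that is, the trace bilinear form applied to the adjoint recovers the partial polarization of the cubic norm N, which is the gradient axiom of a cubic Jordan algebra for the first Tits construction. -/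
open Matrix

/-- The underlying `R`-module of the first Tits construction `J(A, λ)`,
where `A` is the algebra of 3×3 matrices over `R`: it is `A × A × A`. -/
abbrev Tits (R : Type*) [CommRing R] :=
  Matrix (Fin 3) (Fin 3) R × Matrix (Fin 3) (Fin 3) R × Matrix (Fin 3) (Fin 3) R

section TitsDefs

variable {R : Type*} [CommRing R]

/-- The cubic norm `N(a₀,a₁,a₂) = det a₀ + λ det a₁ + λ⁻¹ det a₂ − tr(a₀a₁a₂)`. -/
def titsN (lam : Rˣ) (x : Tits R) : R :=
  x.1.det + (lam : R) * x.2.1.det + ((lam⁻¹ : Rˣ) : R) * x.2.2.det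
    - (x.1 * x.2.1 * x.2.2).trace

/-- The adjoint map
`(a₀,a₁,a₂)^# = (adj a₀ − a₁a₂, λ⁻¹ adj a₂ − a₀a₁, λ adj a₁ − a₂a₀)`. -/
def titsSharp (lam : Rˣ) (x : Tits R) : Tits R :=
  (x.1.adjugate - x.2.1 * x.2.2,
   ((lam⁻¹ : Rˣ) : R) • x.2.2.adjugate - x.1 * x.2.1,
   (lam : R) • x.2.1.adjugate - x.2.2 * x.1)

/-- The cross product `x × y = (x+y)^# − x^# − y^#`. -/
def titsCross (lam : Rˣ) (x y : Tits R) : Tits R :=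
  titsSharp lam (x + y) - titsSharp lam x - titsSharp lam y

/-- The trace bilinear form `T(x,y) = tr(a₀b₀) + tr(a₁b₂) + tr(a₂b₁)`. -/
def titsT (x y : Tits R) : R :=
  (x.1 * y.1).trace + (x.2.1 * y.2.2).trace + (x.2.2 * y.2.1).trace

/-- The `U`-operator `U_x z = T(x,z) • x − x^# × z`. -/
def titsU (lam : Rˣ) (x z : Tits R) : Tits R :=
  titsT x z • x - titsCross lam (titsSharp lam x) z

/-- The partial polarization `∂N` of the cubic norm:
`∂N((a₀,a₁,a₂),(b₀,b₁,b₂)) = tr(adj a₀ · b₀) + λ tr(adj a₁ · b₁) + λ⁻¹ tr(adj a₂ · b₂)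
  − tr(b₀a₁a₂) − tr(a₀b₁a₂) − tr(a₀a₁b₂)`. -/
def titsDN (lam : Rˣ) (x y : Tits R) : R :=
  (x.1.adjugate * y.1).trace + (lam : R) * (x.2.1.adjugate * y.2.1).trace
    + ((lam⁻¹ : Rˣ) : R) * (x.2.2.adjugate * y.2.2).trace
    - (y.1 * x.2.1 * x.2.2).trace - (x.1 * y.2.1 * x.2.2).trace
    - (x.1 * x.2.1 * y.2.2).trace

/-- The base point `e = (1,0,0)` of the first Tits construction. -/
def titsE : Tits R := (1, 0, 0)

end TitsDefs


/-- the gradient axiom `T(x^#, y) = dN(x, y)` for the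
first Tits construction. -/
theorem titsT_sharp_eq_dN (R : Type*) [CommRing R] (lam : Rˣ) (x y : Tits R) :
    titsT (titsSharp lam x) y = titsDN lam x y := by
  simp only [titsT, titsSharp, titsDN, sub_mul, Matrix.smul_mul, Matrix.trace_sub,
    Matrix.trace_smul, smul_eq_mul]
  rw [Matrix.trace_mul_comm (x.2.1 * x.2.2) y.1, ← Matrix.trace_mul_cycle x.1 y.2.1 x.2.2,
    mul_assoc, mul_assoc, mul_assoc]
  ring
end

section
/- The base point e = (1,0,0) of the first Tits construction J(A, λ) satisfies the base point axioms of a cubic Jordan algebra: e^# = e, N(e) = 1, and for every x = (a₀,a₁,a₂) ∈ J one has e × x = T(x)•e − x, where T(x) := ∂N(e, x) and ∂N((a₀,a₁,a₂),(b₀,b₁,b₂)) = trace(adjugate(a₀)·b₀) + λ·trace(adjugate(a₁)·b₁) + λ⁻¹·trace(adjugate(a₂)·b₂) − trace(b₀·a₁·a₂) − trace(a₀·b₁·a₂) − trace(a₀·a₁·b₂); moreover T(x) = trace(a₀). -/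
open Matrix

private lemma adj_one_add {R : Type*} [CommRing R] (a : Matrix (Fin 3) (Fin 3) R) :
    (1 + a).adjugate = a.adjugate + a.trace • (1 : Matrix (Fin 3) (Fin 3) R) - a + 1 := by
  ext i j
  simp only [Matrix.adjugate_fin_three, Matrix.trace_fin_three, Matrix.add_apply,
    Matrix.sub_apply, Matrix.smul_apply, Matrix.one_apply, Matrix.of_apply, smul_eq_mul]
  fin_cases i <;> fin_cases j <;> simp <;> ring

/-- the base point axioms for `e = (1,0,0)`:
`e^# = e`, `N(e) = 1`, `e × x = T(x) • e - x` where `T(x) = dN(e,x)`,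
and moreover `T(x) = trace(a₀)`. -/
theorem titsE_basePoint (R : Type*) [CommRing R] (lam : Rˣ) :
    titsSharp lam (titsE : Tits R) = titsE ∧
    titsN lam (titsE : Tits R) = 1 ∧
    (∀ x : Tits R, titsCross lam titsE x = titsDN lam titsE x • titsE - x) ∧
    (∀ x : Tits R, titsDN lam titsE x = x.1.trace) := by
  refine ⟨?_, ?_, ?_, ?_⟩
  · simp [titsSharp, titsE, Matrix.adjugate_one, Matrix.adjugate_zero]
  · simp [titsN, titsE]
  · intro x
    obtain ⟨a₀, a₁, a₂⟩ := x
    have h := adj_one_add a₀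
    simp only [titsCross, titsSharp, titsE, titsDN, Prod.mk_add_mk, Prod.mk_sub_mk,
      Prod.smul_mk, Matrix.adjugate_one, Matrix.adjugate_zero, Prod.mk.injEq]
    refine ⟨?_, ?_, ?_⟩
    · simp only [h]
      ext i j
      simp [Matrix.trace_fin_three, Matrix.one_apply, Matrix.smul_apply, smul_eq_mul]
      ring
    · ext i j
      simp [Matrix.add_mul, Matrix.one_mul]
    · ext i j
      simp [Matrix.mul_add, Matrix.mul_one]
  · intro x
    simp [titsDN, titsE]
end

section
/- For every z = (b₀,b₁,b₂) ∈ J one has U_{(0,0,1)}(z) = (λ⁻¹•b₂, λ⁻¹•b₀, b₁). In particular, U_{(0,0,1)} is an R-linear automorphism of the R-module J, with inverse (c₀,c₁,c₂) ↦ (λ•c₁, c₂, λ•c₀). -/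
open Matrix

private lemma adj_add_smul_one' {R : Type*} [CommRing R] (b : Matrix (Fin 3) (Fin 3) R) (t : R) :
    (b + t • 1).adjugate
      = b.adjugate + t • (b.trace • (1 : Matrix (Fin 3) (Fin 3) R) - b) + (t * t) • 1 := by
  ext i j
  fin_cases i <;> fin_cases j <;>
    simp [adjugate_fin_three, trace_fin_three, Matrix.one_apply, Matrix.smul_apply] <;> ring

private lemma titsU_e2_key {R : Type*} [CommRing R] (lam : Rˣ) (z : Tits R) :
    titsU lam ((0, 0, 1) : Tits R) z =
      (((lam⁻¹ : Rˣ) : R) • z.2.2, ((lam⁻¹ : Rˣ) : R) • z.1, z.2.1) := by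
  obtain ⟨b0, b1, b2⟩ := z
  have h1 : (lam : R) * ((lam⁻¹ : Rˣ) : R) = 1 := lam.mul_inv
  simp only [titsU, titsT, titsCross, titsSharp, Prod.mk_add_mk, Prod.mk_sub_mk,
    Prod.smul_mk, adjugate_zero, adjugate_one, Matrix.mul_zero, Matrix.zero_mul,
    Matrix.mul_one, Matrix.one_mul, sub_zero, zero_sub, smul_zero, zero_add, add_zero,
    trace_zero, zero_mul, mul_zero]
  refine Prod.ext ?_ (Prod.ext ?_ ?_)
  · show -(b0.adjugate - (((lam⁻¹:Rˣ):R) • 1 + b1) * b2 - (b0.adjugate - b1 * b2)) = _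
    simp only [add_mul, Matrix.smul_mul, Matrix.one_mul]
    abel
  · show -(((lam⁻¹:Rˣ):R) • b2.adjugate - b0 * (((lam⁻¹:Rˣ):R) • 1 + b1)
        - (((lam⁻¹:Rˣ):R) • b2.adjugate - b0 * b1)) = _
    simp only [mul_add, Matrix.mul_smul, Matrix.mul_one]
    abel
  · show b1.trace • (1 : Matrix (Fin 3) (Fin 3) R) -
        ((lam:R) • (((lam⁻¹:Rˣ):R) • 1 + b1).adjugate - b2 * b0
          - (lam:R) • (((lam⁻¹:Rˣ):R) • (1:Matrix (Fin 3) (Fin 3) R)).adjugate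
          - ((lam:R) • b1.adjugate - b2 * b0)) = b1
    rw [add_comm (((lam⁻¹:Rˣ):R) • (1:Matrix (Fin 3) (Fin 3) R)) b1, adj_add_smul_one',
      adjugate_smul, adjugate_one]
    simp only [smul_add, smul_sub, smul_smul]
    norm_num
    have h2 : (lam : R) * ((lam⁻¹:Rˣ):R)^2 = ((lam⁻¹:Rˣ):R) := by
      rw [sq, ← mul_assoc, h1, one_mul]
    rw [h2]
    abel

/-- `U_(0,0,1) (b₀,b₁,b₂) = (λ⁻¹ • b₂, λ⁻¹ • b₀, b₁)`; in particular
`U_(0,0,1)` is an `R`-linear automorphism of `J` with inverse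
`(c₀,c₁,c₂) ↦ (λ • c₁, c₂, λ • c₀)`. -/
theorem titsU_e2 (R : Type*) [CommRing R] (lam : Rˣ) :
    (∀ z : Tits R, titsU lam ((0, 0, 1) : Tits R) z =
        (((lam⁻¹ : Rˣ) : R) • z.2.2, ((lam⁻¹ : Rˣ) : R) • z.1, z.2.1)) ∧
    IsLinearMap R (titsU lam ((0, 0, 1) : Tits R)) ∧
    Function.Bijective (titsU lam ((0, 0, 1) : Tits R)) ∧
    Function.LeftInverse (fun c : Tits R => ((lam : R) • c.2.1, c.2.2, (lam : R) • c.1))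
      (titsU lam ((0, 0, 1) : Tits R)) ∧
    Function.RightInverse (fun c : Tits R => ((lam : R) • c.2.1, c.2.2, (lam : R) • c.1))
      (titsU lam ((0, 0, 1) : Tits R)) := by
  have key := titsU_e2_key (R := R) lam
  have h1 : (lam : R) * ((lam⁻¹ : Rˣ) : R) = 1 := lam.mul_inv
  have h1' : ((lam⁻¹ : Rˣ) : R) * (lam : R) = 1 := lam.inv_mul
  have li : Function.LeftInverse
      (fun c : Tits R => ((lam : R) • c.2.1, c.2.2, (lam : R) • c.1))
      (titsU lam ((0, 0, 1) : Tits R)) := by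
    intro z
    simp [key, smul_smul, h1]
  have ri : Function.RightInverse
      (fun c : Tits R => ((lam : R) • c.2.1, c.2.2, (lam : R) • c.1))
      (titsU lam ((0, 0, 1) : Tits R)) := by
    intro c
    simp [key, smul_smul, h1']
  refine ⟨key, ⟨?_, ?_⟩, ⟨li.injective, ri.surjective⟩, li, ri⟩
  · intro x y
    simp [key, smul_add, Prod.ext_iff]
  · intro c x
    simp [key, Prod.ext_iff, smul_smul, mul_comm]
end

section
/- For every y ∈ A and every z = (b₀,b₁,b₂) ∈ J one has U_{(0,y,0)}(z) = (λ•(b₁·adjugate(y)), y·b₂·y, λ•(adjugate(y)·b₀)). Moreover, the R-linear map U_{(0,y,0)} : J → J is bijective if and only if det(y) is a unit of R. -/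
open Matrix

/-!
For `x = (0, y, 0)` one has `x^# = (0, 0, λ adj y)`, so the only nonlinear input to `U_x z` is
the cross product `a × b = adj (a + b) - adj a - adj b` of `3 × 3` matrices at `a = λ adj y`.
For matrices, `adj y × b = tr (y b) y - y b y` is the associative case of the identity
`U_y b = T(y, b) y - y^# × b`, with `U_y b = y b y`. Hence `U_x` cyclically permutes the three
components of `z` while multiplying them by `y` or `adj y` on either side and by the unit `λ`;
it is bijective exactly when `y`, and then `adj y`, is invertible, i.e. when `det y` is a unit.
-/

theorem bijective_rotate_prodMap {α : Type*} {f g h : α → α} (hf : Function.Bijective f)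
    (hg : Function.Bijective g) (hh : Function.Bijective h) :
    Function.Bijective (fun z : α × α × α => (f z.2.1, g z.2.2, h z.1)) :=
  (hf.prodMap (hg.prodMap hh)).comp ((Equiv.prodComm _ _).trans (Equiv.prodAssoc _ _ _)).bijective

section TitsMidY

variable {R : Type*} [CommRing R]

theorem Matrix.adjugate_smul_adjugate_add_sub (t : R) (y b : Matrix (Fin 3) (Fin 3) R) :
    adjugate (t • adjugate y + b) - adjugate (t • adjugate y) - adjugate b
      = t • ((y * b).trace • y - y * b * y) := by
  ext i j
  fin_cases i <;> fin_cases j <;>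
    simp [adjugate_fin_three, mul_apply, trace_fin_three, Fin.sum_univ_succ] <;> ring

theorem titsU_zero_mid_zero_apply (lam : Rˣ) (y : Matrix (Fin 3) (Fin 3) R) (z : Tits R) :
    titsU lam ((0, y, 0) : Tits R) z =
      ((lam : R) • (z.2.1 * y.adjugate), y * z.2.2 * y, (lam : R) • (y.adjugate * z.1)) := by
  obtain ⟨b₀, b₁, b₂⟩ := z
  have polar : ((lam⁻¹ : Rˣ) : R) • ((lam : R) • y.adjugate + b₂).adjugate
      - ((lam⁻¹ : Rˣ) : R) • ((lam : R) • y.adjugate).adjugate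
      - ((lam⁻¹ : Rˣ) : R) • b₂.adjugate = (y * b₂).trace • y - y * b₂ * y := by
    rw [← smul_sub, ← smul_sub, adjugate_smul_adjugate_add_sub, smul_smul, Units.inv_mul,
      one_smul]
  refine Prod.ext ?_ (Prod.ext ?_ ?_)
  · simp [titsU, titsT, titsCross, titsSharp, mul_add]
  · simp only [titsU, titsT, titsCross, titsSharp, Prod.fst_add, Prod.snd_add, Prod.smul_mk,
      Prod.mk_sub_mk, mul_zero, zero_mul, add_zero, zero_add, sub_zero, zero_sub,
      adjugate_zero, smul_zero, trace_zero]
    rw [sub_eq_iff_eq_add.mp polar.symm]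
    abel
  · simp [titsU, titsT, titsCross, titsSharp, add_mul]

theorem isUnit_det_of_surjective_titsU_zero_mid_zero (lam : Rˣ) {y : Matrix (Fin 3) (Fin 3) R}
    (h : Function.Surjective (titsU lam ((0, y, 0) : Tits R))) : IsUnit y.det := by
  obtain ⟨z, hz⟩ := h (0, 1, 0)
  rw [titsU_zero_mid_zero_apply] at hz
  have hmid : y * (z.2.2 * y) = 1 := by rw [← Matrix.mul_assoc]; exact congrArg (·.2.1) hz
  exact isUnit_det_of_right_inverse hmid

theorem bijective_titsU_zero_mid_zero (lam : Rˣ) {y : Matrix (Fin 3) (Fin 3) R}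
    (hy : IsUnit y.det) : Function.Bijective (titsU lam ((0, y, 0) : Tits R)) := by
  have hy' : IsUnit y := (isUnit_iff_isUnit_det y).mpr hy
  have hadj : IsUnit y.adjugate := by
    rw [isUnit_iff_isUnit_det, det_adjugate]
    exact hy.pow _
  have hlam : Function.Bijective (fun b : Matrix (Fin 3) (Fin 3) R => (lam : R) • b) :=
    lam.isUnit.smul_bijective
  have hconj : Function.Bijective (fun b => y * b * y) := by
    simpa only [Function.comp_def, Matrix.mul_assoc] using
      (IsUnit.isUnit_iff_mulLeft_bijective.mp hy').comp
        (IsUnit.isUnit_iff_mulRight_bijective.mp hy')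
  rw [funext (titsU_zero_mid_zero_apply lam y)]
  exact bijective_rotate_prodMap (hlam.comp (IsUnit.isUnit_iff_mulRight_bijective.mp hadj))
    hconj (hlam.comp (IsUnit.isUnit_iff_mulLeft_bijective.mp hadj))

end TitsMidY

/-- `U_(0,y,0) (b₀,b₁,b₂) = (λ • (b₁ ⬝ adj y), y ⬝ b₂ ⬝ y, λ • (adj y ⬝ b₀))`,
and the `R`-linear map `U_(0,y,0) : J → J` is bijective if and only if `det y`
is a unit of `R`. -/
theorem titsU_midY (R : Type*) [CommRing R] (lam : Rˣ) (y : Matrix (Fin 3) (Fin 3) R) :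
    (∀ z : Tits R, titsU lam ((0, y, 0) : Tits R) z =
        ((lam : R) • (z.2.1 * y.adjugate), y * z.2.2 * y, (lam : R) • (y.adjugate * z.1))) ∧
    (Function.Bijective (titsU lam ((0, y, 0) : Tits R)) ↔ IsUnit y.det) :=
  ⟨titsU_zero_mid_zero_apply lam y,
    fun h => isUnit_det_of_surjective_titsU_zero_mid_zero lam h.2,
    bijective_titsU_zero_mid_zero lam⟩
end

section
/- For every y ∈ A (in particular for every y with det(y) ∈ Rˣ, as in the paper) one has the key identity of the transitivity lemma: U_{(0,0,1)}( U_{(0,y,0)}( (y,0,0) ) ) = det(y) • (1,0,0), where (y,0,0) is the image of y under the canonical embedding of A into the first component of the first Tits construction J(A, λ). -/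
open Matrix

/-- the key identity of the transitivity lemma:
`U_(0,0,1) (U_(0,y,0) ((y,0,0))) = det y • (1,0,0)`. -/
theorem titsU_transitivity_identity (R : Type*) [CommRing R] (lam : Rˣ)
    (y : Matrix (Fin 3) (Fin 3) R) :
    titsU lam ((0, 0, 1) : Tits R) (titsU lam ((0, y, 0) : Tits R) ((y, 0, 0) : Tits R)) =
      y.det • ((1, 0, 0) : Tits R) := by
  have hadj2 : ∀ (c : R) (M : Matrix (Fin 3) (Fin 3) R),
      adjugate (c • M) = c^2 • adjugate M := by
    intro c M; rw [adjugate_smul]; norm_num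
  have hadjadj : ∀ (M : Matrix (Fin 3) (Fin 3) R),
      adjugate (adjugate M) = M.det • M := by
    intro M; rw [adjugate_adjugate]; · norm_num
    · simp
  have h1 : titsU lam ((0, y, 0) : Tits R) ((y, 0, 0) : Tits R)
      = (0, 0, ((lam : R) * y.det) • (1 : Matrix (Fin 3) (Fin 3) R)) := by
    simp only [titsU, titsT, titsSharp, titsCross, Prod.mk_add_mk, Prod.mk_sub_mk,
      Prod.smul_mk, Prod.fst, Prod.snd, hadj2, hadjadj, adjugate_zero,
      Matrix.mul_zero, Matrix.zero_mul, Matrix.mul_one, Matrix.one_mul,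
      Matrix.trace_zero, smul_zero, zero_smul, sub_zero, zero_sub, add_zero, zero_add,
      Matrix.smul_mul, Matrix.mul_smul, Matrix.mul_adjugate, Matrix.adjugate_mul,
      smul_smul]
    refine Prod.ext ?_ (Prod.ext ?_ ?_) <;> simp
  rw [h1]
  simp only [titsU, titsT, titsSharp, titsCross, Prod.mk_add_mk, Prod.mk_sub_mk,
    Prod.smul_mk, Prod.fst, Prod.snd, hadj2, hadjadj, adjugate_zero, adjugate_one,
    Matrix.mul_zero, Matrix.zero_mul, Matrix.mul_one, Matrix.one_mul,
    Matrix.trace_zero, smul_zero, zero_smul, sub_zero, zero_sub, add_zero, zero_add,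
    Matrix.smul_mul, Matrix.mul_smul, smul_smul, Matrix.det_one, Matrix.det_zero]
  have hc : (lam : R) * y.det * ((lam⁻¹ : Rˣ) : R) = y.det := by
    rw [mul_comm (lam : R), mul_assoc, Units.mul_inv, mul_one]
  refine Prod.ext ?_ (Prod.ext ?_ ?_) <;> simp [hc, mul_comm, mul_assoc, mul_left_comm, Units.mul_inv, Units.inv_mul]
end

section
/- (Transitivity lemma, split form.) Let y ∈ A with det(y) ∈ Rˣ. Let G be the subgroup of the group of R-linear automorphisms of the R-module J generated by the homotheties z ↦ c•z for units c ∈ Rˣ together with all operators U_x for x ∈ J such that U_x : J → J is bijective. Then there exists g ∈ G with g((y,0,0)) = (1,0,0); that is, the element (y,0,0) lies in the orbit of the identity element (1,0,0) of J(A, λ) under this subgroup. -/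
open Matrix

section Aux

variable {R : Type*} [CommRing R]

private lemma adj_smul_add (c : R) (A B : Matrix (Fin 3) (Fin 3) R) :
    (c • A + B).adjugate = (c*c) • A.adjugate + B.adjugate
      + c • ((A + B).adjugate - A.adjugate - B.adjugate) := by
  ext i j
  fin_cases i <;> fin_cases j <;>
    simp [Matrix.adjugate_fin_three, Matrix.mul_apply, Fin.sum_univ_three] <;> ring

private lemma adj_one_add_s8 (B : Matrix (Fin 3) (Fin 3) R) :
    ((1 : Matrix (Fin 3) (Fin 3) R) + B).adjugate
      = 1 + B.adjugate + (B.trace • 1 - B) := by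
  ext i j
  fin_cases i <;> fin_cases j <;>
    simp [Matrix.adjugate_fin_three, Matrix.trace_fin_three, Matrix.one_apply] <;> ring

set_option maxHeartbeats 1000000 in
private lemma jordanU (a b : Matrix (Fin 3) (Fin 3) R) :
    (a*b).trace • a - ((a.adjugate + b).adjugate - a.adjugate.adjugate - b.adjugate)
      = a * b * a := by
  ext i j
  fin_cases i <;> fin_cases j <;>
    simp [Matrix.adjugate_fin_three, Matrix.trace_fin_three, Matrix.mul_apply,
      Fin.sum_univ_three] <;> ring

lemma titsU_x1 (lam : Rˣ) (z : Tits R) :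
    titsU lam ((0, 1, 0) : Tits R) z = ((lam : R) • z.2.1, z.2.2, (lam : R) • z.1) := by
  obtain ⟨z0, z1, z2⟩ := z
  have hba : ((lam⁻¹ : Rˣ) : R) * (lam : R) = 1 := lam.inv_mul
  have e2 : (((lam:R)) • (1 : Matrix (Fin 3) (Fin 3) R)).adjugate
      = ((lam:R)*(lam:R)) • 1 := by
    rw [Matrix.adjugate_smul, Matrix.adjugate_one]; norm_num [sq]
  have e1 : (((lam:R)) • (1 : Matrix (Fin 3) (Fin 3) R) + z2).adjugate
      = ((lam:R)*(lam:R)) • 1 + z2.adjugate + (lam:R) • (z2.trace • 1 - z2) := by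
    rw [adj_smul_add, adj_one_add_s8, Matrix.adjugate_one]
    module
  simp only [titsU, titsT, titsCross, titsSharp, Prod.mk_add_mk, Prod.mk_sub_mk,
    Prod.smul_mk, Matrix.adjugate_zero, Matrix.adjugate_one, zero_mul, mul_zero,
    one_mul, mul_one, smul_zero, sub_zero, zero_sub, add_zero, zero_add,
    Matrix.trace_zero, neg_zero, Prod.mk.injEq]
  refine ⟨?_, ?_, ?_⟩
  · rw [mul_add]
    simp only [Matrix.mul_smul, mul_one]
    abel
  · rw [e1, e2]
    match_scalars <;>
      first
        | ring1
        | linear_combination hba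
        | linear_combination z2.trace * hba
        | linear_combination (-z2.trace) * hba
        | linear_combination (-(1:R)) * hba
  · rw [add_mul]
    simp only [Matrix.smul_mul, one_mul]
    abel

lemma titsU_x2 (lam : Rˣ) (y : Matrix (Fin 3) (Fin 3) R) (z : Tits R) :
    titsU lam ((0, 0, y) : Tits R) z
      = (((lam⁻¹ : Rˣ) : R) • (y.adjugate * z.2.2),
         ((lam⁻¹ : Rˣ) : R) • (z.1 * y.adjugate), y * z.2.1 * y) := by
  obtain ⟨z0, z1, z2⟩ := z
  have hab : (lam : R) * ((lam⁻¹ : Rˣ) : R) = 1 := lam.mul_inv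
  have e2 : (((lam⁻¹ : Rˣ) : R) • y.adjugate).adjugate
      = (((lam⁻¹ : Rˣ) : R) * ((lam⁻¹ : Rˣ) : R)) • y.adjugate.adjugate := by
    rw [Matrix.adjugate_smul]; norm_num [sq]
  have e1 := adj_smul_add (((lam⁻¹ : Rˣ) : R)) y.adjugate z1
  have e3 := jordanU y z1
  simp only [titsU, titsT, titsCross, titsSharp, Prod.mk_add_mk, Prod.mk_sub_mk,
    Prod.smul_mk, Matrix.adjugate_zero, Matrix.adjugate_one, zero_mul, mul_zero,
    one_mul, mul_one, smul_zero, sub_zero, zero_sub, add_zero, zero_add,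
    Matrix.trace_zero, neg_zero, Prod.mk.injEq]
  refine ⟨?_, ?_, ?_⟩
  · rw [add_mul]
    simp only [Matrix.smul_mul]
    abel
  · rw [mul_add]
    simp only [Matrix.mul_smul]
    abel
  · rw [e1, e2, ← e3]
    match_scalars <;>
      first
        | ring1
        | linear_combination hab
        | linear_combination (-(1:R)) * hab

end Aux


/-- transitivity lemma, split form: if `det y ∈ Rˣ` then `(y,0,0)`
lies in the orbit of `(1,0,0)` under the subgroup of `R`-linear automorphisms of
`J` generated by the homotheties by units together with the bijective operators
`U_x`. -/
theorem tits_transitivity (R : Type*) [CommRing R] (lam : Rˣ)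
    (y : Matrix (Fin 3) (Fin 3) R) (hy : IsUnit y.det) :
    ∃ g ∈ Subgroup.closure
        {g : Tits R ≃ₗ[R] Tits R |
          (∃ c : Rˣ, ∀ z : Tits R, g z = (c : R) • z) ∨
          (∃ x : Tits R, Function.Bijective (titsU lam x) ∧
            ∀ z : Tits R, g z = titsU lam x z)},
      g ((y, 0, 0) : Tits R) = ((1, 0, 0) : Tits R) := by
  have hab : (lam : R) * ((lam⁻¹ : Rˣ) : R) = 1 := lam.mul_inv
  have hba : ((lam⁻¹ : Rˣ) : R) * (lam : R) = 1 := lam.inv_mul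
  set d : Rˣ := hy.unit with hd
  have hdspec : (d : R) = y.det := hy.unit_spec
  have hdinv : ((d⁻¹ : Rˣ) : R) * y.det = 1 := by rw [← hdspec]; exact d.inv_mul
  have hdinv' : y.det * ((d⁻¹ : Rˣ) : R) = 1 := by rw [← hdspec]; exact d.mul_inv
  have hAy : y.adjugate * y = y.det • 1 := Matrix.adjugate_mul y
  have hyA : y * y.adjugate = y.det • 1 := Matrix.mul_adjugate y
  -- the U-operator at (0,1,0) as a linear equivalence
  let g1 : Tits R ≃ₗ[R] Tits R :=
  { toFun := fun z => ((lam : R) • z.2.1, z.2.2, (lam : R) • z.1)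
    map_add' := fun a b => by simp [Prod.ext_iff, smul_add]
    map_smul' := fun r a => by simp [Prod.ext_iff, smul_comm r]
    invFun := fun w => (((lam⁻¹ : Rˣ) : R) • w.2.2, ((lam⁻¹ : Rˣ) : R) • w.1, w.2.1)
    left_inv := fun z => by simp [Prod.ext_iff, smul_smul, hba]
    right_inv := fun w => by simp [Prod.ext_iff, smul_smul, hab] }
  -- the U-operator at (0,0,y) as a linear equivalence
  let g2 : Tits R ≃ₗ[R] Tits R :=
  { toFun := fun z => (((lam⁻¹ : Rˣ) : R) • (y.adjugate * z.2.2),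
      ((lam⁻¹ : Rˣ) : R) • (z.1 * y.adjugate), y * z.2.1 * y)
    map_add' := fun a b => by
      simp [Prod.ext_iff, mul_add, add_mul, smul_add]
    map_smul' := fun r a => by
      simp [Prod.ext_iff, Matrix.mul_smul, Matrix.smul_mul, smul_comm r]
    invFun := fun w => ((lam : R) • ((d⁻¹ : Rˣ) : R) • (w.2.1 * y),
      ((d⁻¹ : Rˣ) : R) • ((d⁻¹ : Rˣ) : R) • (y.adjugate * w.2.2 * y.adjugate),
      (lam : R) • ((d⁻¹ : Rˣ) : R) • (y * w.1))
    left_inv := fun z => by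
      obtain ⟨z0, z1, z2⟩ := z
      refine Prod.ext ?_ (Prod.ext ?_ ?_)
      · show (lam : R) • ((d⁻¹ : Rˣ) : R) •
            ((((lam⁻¹ : Rˣ) : R) • (z0 * y.adjugate)) * y) = z0
        rw [Matrix.smul_mul, mul_assoc, hAy, Matrix.mul_smul, mul_one]
        match_scalars
        linear_combination (((d⁻¹ : Rˣ) : R) * y.det) * hab + hdinv
      · show ((d⁻¹ : Rˣ) : R) • ((d⁻¹ : Rˣ) : R) •
            (y.adjugate * (y * z1 * y) * y.adjugate) = z1
        rw [show y.adjugate * (y * z1 * y) * y.adjugate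
            = (y.adjugate * y) * z1 * (y * y.adjugate) by noncomm_ring, hAy, hyA]
        rw [Matrix.smul_mul, Matrix.mul_smul, Matrix.smul_mul, Matrix.one_mul,
          Matrix.mul_one]
        match_scalars
        linear_combination (((d⁻¹ : Rˣ) : R) * y.det) * hdinv + hdinv
      · show (lam : R) • ((d⁻¹ : Rˣ) : R) •
            (y * (((lam⁻¹ : Rˣ) : R) • (y.adjugate * z2))) = z2
        rw [Matrix.mul_smul, ← mul_assoc, hyA, Matrix.smul_mul, Matrix.one_mul]
        match_scalars
        linear_combination (((d⁻¹ : Rˣ) : R) * y.det) * hab + hdinv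
    right_inv := fun w => by
      obtain ⟨w0, w1, w2⟩ := w
      refine Prod.ext ?_ (Prod.ext ?_ ?_)
      · show ((lam⁻¹ : Rˣ) : R) •
            (y.adjugate * ((lam : R) • ((d⁻¹ : Rˣ) : R) • (y * w0))) = w0
        rw [Matrix.mul_smul, Matrix.mul_smul, ← mul_assoc, hAy, Matrix.smul_mul,
          Matrix.one_mul]
        match_scalars
        linear_combination (((d⁻¹ : Rˣ) : R) * y.det) * hba + hdinv
      · show ((lam⁻¹ : Rˣ) : R) •
            (((lam : R) • ((d⁻¹ : Rˣ) : R) • (w1 * y)) * y.adjugate) = w1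
        rw [Matrix.smul_mul, Matrix.smul_mul, mul_assoc, hyA, Matrix.mul_smul,
          mul_one]
        match_scalars
        linear_combination (((d⁻¹ : Rˣ) : R) * y.det) * hba + hdinv
      · show y * (((d⁻¹ : Rˣ) : R) • ((d⁻¹ : Rˣ) : R) •
            (y.adjugate * w2 * y.adjugate)) * y = w2
        rw [Matrix.mul_smul, Matrix.mul_smul, Matrix.smul_mul, Matrix.smul_mul]
        rw [show y * (y.adjugate * w2 * y.adjugate) * y
            = (y * y.adjugate) * w2 * (y.adjugate * y) by noncomm_ring, hyA, hAy]
        rw [Matrix.smul_mul, Matrix.mul_smul, Matrix.smul_mul, Matrix.one_mul,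
          Matrix.mul_one]
        match_scalars
        linear_combination (((d⁻¹ : Rˣ) : R) * y.det) * hdinv + hdinv }
  -- the homothety by d⁻¹
  let g3 : Tits R ≃ₗ[R] Tits R :=
  { toFun := fun z => ((d⁻¹ : Rˣ) : R) • z
    map_add' := fun a b => by simp
    map_smul' := fun r a => by simp [smul_comm r]
    invFun := fun z => (d : R) • z
    left_inv := fun z => by simp [smul_smul, d.mul_inv]
    right_inv := fun z => by simp [smul_smul, d.inv_mul] }
  have hm1 : ∀ z : Tits R, g1 z = titsU lam ((0, 1, 0) : Tits R) z := fun z =>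
    (titsU_x1 lam z).symm
  have hm2 : ∀ z : Tits R, g2 z = titsU lam ((0, 0, y) : Tits R) z := fun z =>
    (titsU_x2 lam y z).symm
  set S : Set (Tits R ≃ₗ[R] Tits R) :=
    {g : Tits R ≃ₗ[R] Tits R |
      (∃ c : Rˣ, ∀ z : Tits R, g z = (c : R) • z) ∨
      (∃ x : Tits R, Function.Bijective (titsU lam x) ∧
        ∀ z : Tits R, g z = titsU lam x z)} with hS
  have m1 : g1 ∈ Subgroup.closure S := Subgroup.subset_closure <| Or.inr
    ⟨(0, 1, 0), by
      rw [show titsU lam ((0, 1, 0) : Tits R) = ⇑g1 from funext fun z => (hm1 z).symm]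
      exact g1.bijective, hm1⟩
  have m2 : g2 ∈ Subgroup.closure S := Subgroup.subset_closure <| Or.inr
    ⟨(0, 0, y), by
      rw [show titsU lam ((0, 0, y) : Tits R) = ⇑g2 from funext fun z => (hm2 z).symm]
      exact g2.bijective, hm2⟩
  have m3 : g3 ∈ Subgroup.closure S := Subgroup.subset_closure <| Or.inl
    ⟨d⁻¹, fun z => rfl⟩
  refine ⟨g3 * g2 * g1, mul_mem (mul_mem m3 m2) m1, ?_⟩
  show g3 (g2 (g1 ((y, 0, 0) : Tits R))) = ((1, 0, 0) : Tits R)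
  have h1 : g1 ((y, 0, 0) : Tits R) = ((0, 0, (lam : R) • y) : Tits R) := by
    show ((lam : R) • (0 : Matrix (Fin 3) (Fin 3) R), (0 : Matrix (Fin 3) (Fin 3) R),
      (lam : R) • y) = _
    simp
  have h2 : g2 ((0, 0, (lam : R) • y) : Tits R) = ((y.det • 1, 0, 0) : Tits R) := by
    show (((lam⁻¹ : Rˣ) : R) • (y.adjugate * ((lam : R) • y)),
      ((lam⁻¹ : Rˣ) : R) • ((0 : Matrix (Fin 3) (Fin 3) R) * y.adjugate),
      y * 0 * y) = _
    refine Prod.ext ?_ (Prod.ext ?_ ?_)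
    · show ((lam⁻¹ : Rˣ) : R) • (y.adjugate * ((lam : R) • y)) = y.det • 1
      rw [Matrix.mul_smul, hAy]
      match_scalars
      linear_combination y.det * hba
    · simp
    · simp
  rw [h1, h2]
  show ((d⁻¹ : Rˣ) : R) • ((y.det • (1 : Matrix (Fin 3) (Fin 3) R), 0, 0) : Tits R) = _
  rw [Prod.smul_mk, Prod.smul_mk, smul_smul, hdinv, one_smul]
  simp
end
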